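/- For a positive continuous function f on [a, b] and 0 < α ≤ 1, the right multiplicative conformable derivative applied to the right multiplicative conformable integral recovers f: (ᵇ_α T* ᵇ_α I* f)(t) = f(t) for t ∈ (a, b). -/

import Mathlib

/-! `ln ∘ exp` cancels, the fundamental theorem of calculus at the interior point `t` (the kernel
`(b - x) ^ (α - 1)` is integrable and singular only at `b`) gives the derivative
`-(b - t) ^ (α - 1) * ln (f t)`, and the conformable factor `(b - t) ^ (1 - α)` cancels the kernel. -/

open Real intervalIntegral

theorem intervalIntegrable_sub_rpow {r : ℝ} (hr : -1 < r) (t b : ℝ) :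
    IntervalIntegrable (fun x : ℝ => (b - x) ^ r) MeasureTheory.volume t b := by
  simpa using ((intervalIntegrable_rpow' (a := b - b) (b := b - t) hr).comp_sub_left b).symm

theorem hasDerivAt_integral_sub_rpow_mul {g : ℝ → ℝ} {s t b r : ℝ} (hr : -1 < r)
    (hst : s < t) (htb : t < b) (hg : ContinuousOn g (Set.Icc s b)) :
    HasDerivAt (fun y => ∫ x in y..b, (b - x) ^ r * g x) (-((b - t) ^ r * g t)) t := by
  have hsub : Set.uIcc t b ⊆ Set.Icc s b := by
    rw [Set.uIcc_of_le htb.le]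
    exact Set.Icc_subset_Icc_left hst.le
  have hint : IntervalIntegrable (fun x => (b - x) ^ r * g x) MeasureTheory.volume t b :=
    (intervalIntegrable_sub_rpow hr t b).mul_continuousOn (hg.mono hsub)
  have hcont : ContinuousOn (fun x => (b - x) ^ r * g x) (Set.Ioo s b) :=
    ((continuousOn_const.sub continuousOn_id).rpow_const
        fun x hx => Or.inl (sub_pos.2 hx.2).ne').mul
      (hg.mono Set.Ioo_subset_Icc_self)
  have ht : t ∈ Set.Ioo s b := ⟨hst, htb⟩
  exact integral_hasDerivAt_left hint (hcont.stronglyMeasurableAtFilter isOpen_Ioo t ht)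
    (hcont.continuousAt (isOpen_Ioo.mem_nhds ht))

theorem right_mult_conformable_deriv_of_integral_general
    (f : ℝ → ℝ) (a b t α : ℝ)
    (hα : 0 < α) (ht : t ∈ Set.Ioo a b)
    (hcont : ContinuousOn f (Set.Icc a b))
    (hpos : ∀ y ∈ Set.Icc a b, 0 < f y) :
    Real.exp (-(b - t) ^ (1 - α) *
        deriv (fun y =>
          Real.log (Real.exp (∫ x in y..b, (b - x) ^ (α - 1) * Real.log (f x)))) t) =
      f t := by
  have hlogf : ContinuousOn (fun x => Real.log (f x)) (Set.Icc a b) :=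
    hcont.log fun y hy => (hpos y hy).ne'
  have hderiv := hasDerivAt_integral_sub_rpow_mul (r := α - 1) (by linarith) ht.1 ht.2 hlogf
  simp only [Real.log_exp]
  rw [hderiv.deriv, neg_mul_neg, ← mul_assoc, ← rpow_add (sub_pos.2 ht.2)]
  simp only [sub_add_sub_cancel', sub_self, rpow_zero, one_mul]
  exact exp_log (hpos t (Set.Ioo_subset_Icc_self ht))

theorem right_mult_conformable_deriv_of_integral
    (f : ℝ → ℝ) (a b t α : ℝ)
    (hα : 0 < α) (hα1 : α ≤ 1) (ht : t ∈ Set.Ioo a b)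
    (hcont : ContinuousOn f (Set.Icc a b))
    (hpos : ∀ y ∈ Set.Icc a b, 0 < f y) :
    Real.exp (-(b - t) ^ (1 - α) *
        deriv (fun y =>
          Real.log (Real.exp (∫ x in y..b, (b - x) ^ (α - 1) * Real.log (f x)))) t) =
      f t :=
  right_mult_conformable_deriv_of_integral_general f a b t α hα ht hcont hpos
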